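/- arXiv:2108.10632 — 2 statements merged into one kernel-verified Lean document; each statement's English description precedes it below -/
import Mathlib

section
/- Let μ > 0 and x̂₁ ≤ x̂₂ be real numbers, and set Δ = x̂₂ − x̂₁. Define g : ℝ → ℝ by g(y) = 1 − e^{−μ(x̂₁ − y)} for y ≤ x̂₁; g(y) = (1 − e^{−μ(y − x̂₁)})(1 − e^{−μ(x̂₂ − y)}) for x̂₁ < y < x̂₂; and g(y) = 1 − e^{−μ(y − x̂₂)} for y ≥ x̂₂. Then ∫_ℝ (1 − g(y)) dy = 4/μ − (2/μ + Δ) e^{−μΔ}. -/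
/-!
On each of the three pieces `1 - g` is an explicit combination of exponentials: `e^{-μ(x̂₁-y)}`
to the left of `x̂₁`, `e^{-μ(y-x̂₂)}` to the right of `x̂₂`, and, by inclusion–exclusion,
`e^{-μ(y-x̂₁)} + e^{-μ(x̂₂-y)} - e^{-μΔ}` in between. The two tails contribute `1/μ` each and the
middle piece `2(1 - e^{-μΔ})/μ - Δ e^{-μΔ}`.
-/

open MeasureTheory Set Real

theorem integral_eq_Iic_add_intervalIntegral_add_Ioi {E : Type*} [NormedAddCommGroup E]
    [NormedSpace ℝ E] {ν : Measure ℝ} {f : ℝ → E} {a b : ℝ}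
    (h_left : IntegrableOn f (Iic a) ν) (h_mid : IntervalIntegrable f ν a b)
    (h_right : IntegrableOn f (Ioi b) ν) :
    ∫ x, f x ∂ν =
      (∫ x in Iic a, f x ∂ν) + (∫ x in a..b, f x ∂ν) + ∫ x in Ioi b, f x ∂ν := by
  have h_Ioi : IntegrableOn f (Ioi a) ν := by
    rcases le_total a b with hab | hba
    · rw [← Ioc_union_Ioi_eq_Ioi hab]
      exact ((intervalIntegrable_iff_integrableOn_Ioc_of_le hab).1 h_mid).union h_right
    · exact h_right.mono_set (Ioi_subset_Ioi hba)
  rw [← intervalIntegral.integral_Iic_add_Ioi h_left h_Ioi,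
    ← intervalIntegral.integral_interval_add_Ioi' h_mid h_right, add_assoc]

lemma exp_neg_mul_sub_eq_mul_exp (μ x a : ℝ) :
    exp (-(μ * (x - a))) = exp (μ * a) * exp (-μ * x) := by
  rw [← exp_add]; ring_nf

lemma one_sub_mul_one_sub_exp_neg_mul_sub (μ a b y : ℝ) :
    1 - (1 - exp (-(μ * (y - a)))) * (1 - exp (-(μ * (b - y)))) =
      exp (-(μ * (y - a))) + exp (-(μ * (b - y))) - exp (-(μ * (b - a))) := by
  have hexp : exp (-(μ * (y - a))) * exp (-(μ * (b - y))) = exp (-(μ * (b - a))) := by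
    rw [← exp_add]; ring_nf
  linear_combination -hexp

section ExpDecay

variable {μ : ℝ}

lemma integrableOn_exp_neg_mul_sub_Ioi (hμ : 0 < μ) (a : ℝ) :
    IntegrableOn (fun y => exp (-(μ * (y - a)))) (Ioi a) := by
  simp_rw [exp_neg_mul_sub_eq_mul_exp]
  exact (integrableOn_exp_mul_Ioi (neg_neg_of_pos hμ) a).const_mul _

lemma integral_exp_neg_mul_sub_Ioi (hμ : 0 < μ) (a : ℝ) :
    ∫ y in Ioi a, exp (-(μ * (y - a))) = 1 / μ := by
  simp_rw [exp_neg_mul_sub_eq_mul_exp]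
  rw [integral_const_mul, integral_exp_mul_Ioi (neg_neg_of_pos hμ), neg_div_neg_eq,
    mul_div_assoc', ← exp_add]
  simp

lemma integrableOn_exp_neg_mul_sub_Iic (hμ : 0 < μ) (a : ℝ) :
    IntegrableOn (fun y => exp (-(μ * (a - y)))) (Iic a) := by
  simp_rw [exp_neg_mul_sub_eq_mul_exp]
  exact (integrableOn_exp_mul_Iic hμ a).mul_const _

lemma integral_exp_neg_mul_sub_Iic (hμ : 0 < μ) (a : ℝ) :
    ∫ y in Iic a, exp (-(μ * (a - y))) = 1 / μ := by
  simp_rw [exp_neg_mul_sub_eq_mul_exp]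
  rw [integral_mul_const, integral_exp_mul_Iic hμ, div_mul_eq_mul_div, ← exp_add]
  simp

lemma intervalIntegral_exp_neg_mul_sub_left (hμ : μ ≠ 0) (a b : ℝ) :
    ∫ y in a..b, exp (-(μ * (y - a))) = (1 - exp (-(μ * (b - a)))) / μ := by
  simp_rw [show ∀ y, -(μ * (y - a)) = -μ * y + μ * a by intro y; ring]
  rw [intervalIntegral.integral_comp_mul_add (fun x => exp x) (neg_ne_zero.2 hμ), integral_exp,
    smul_eq_mul]
  field_simp
  simp

lemma intervalIntegral_exp_neg_mul_sub_right (hμ : μ ≠ 0) (a b : ℝ) :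
    ∫ y in a..b, exp (-(μ * (b - y))) = (1 - exp (-(μ * (b - a)))) / μ := by
  have h := intervalIntegral.integral_comp_sub_left (a := a) (b := b)
    (fun x => exp (-(μ * (x - a)))) (a + b)
  simp only [add_sub_cancel_right, add_sub_cancel_left] at h
  rw [← intervalIntegral_exp_neg_mul_sub_left hμ, ← h]
  congr 1; ext y; ring_nf

lemma intervalIntegral_exp_neg_mul_sub_add_exp_neg_mul_sub (hμ : μ ≠ 0) (a b : ℝ) :
    ∫ y in a..b, (exp (-(μ * (y - a))) + exp (-(μ * (b - y))) - exp (-(μ * (b - a)))) =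
      2 * (1 - exp (-(μ * (b - a)))) / μ - (b - a) * exp (-(μ * (b - a))) := by
  rw [intervalIntegral.integral_sub, intervalIntegral.integral_add,
    intervalIntegral_exp_neg_mul_sub_left hμ, intervalIntegral_exp_neg_mul_sub_right hμ,
    intervalIntegral.integral_const, smul_eq_mul]
  · ring
  all_goals exact Continuous.intervalIntegrable (by fun_prop) _ _

end ExpDecay

/-- Let `μ > 0` and `x̂₁ ≤ x̂₂`, `Δ = x̂₂ − x̂₁`, and let `g` be the
piecewise non-blocking probability function:
`g y = 1 − e^{−μ(x̂₁ − y)}` for `y ≤ x̂₁`;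
`g y = (1 − e^{−μ(y − x̂₁)})(1 − e^{−μ(x̂₂ − y)})` for `x̂₁ < y < x̂₂`;
`g y = 1 − e^{−μ(y − x̂₂)}` for `y ≥ x̂₂`.
Then `∫_ℝ (1 − g(y)) dy = 4/μ − (2/μ + Δ) e^{−μΔ}`. -/
theorem integral_one_sub_nonblocking_two (μ xh₁ xh₂ : ℝ) (hμ : 0 < μ) (h12 : xh₁ ≤ xh₂)
    (g : ℝ → ℝ)
    (hg1 : ∀ y, y ≤ xh₁ → g y = 1 - Real.exp (-(μ * (xh₁ - y))))
    (hg2 : ∀ y, xh₁ < y → y < xh₂ →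
        g y = (1 - Real.exp (-(μ * (y - xh₁)))) * (1 - Real.exp (-(μ * (xh₂ - y)))))
    (hg3 : ∀ y, xh₂ ≤ y → g y = 1 - Real.exp (-(μ * (y - xh₂)))) :
    ∫ y : ℝ, (1 - g y)
      = 4 / μ - (2 / μ + (xh₂ - xh₁)) * Real.exp (-(μ * (xh₂ - xh₁))) := by
  have hleft : EqOn (fun y => 1 - g y) (fun y => exp (-(μ * (xh₁ - y)))) (Iic xh₁) :=
    fun y hy => by simp [hg1 y hy]
  have hright : EqOn (fun y => 1 - g y) (fun y => exp (-(μ * (y - xh₂)))) (Ioi xh₂) :=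
    fun y hy => by simp [hg3 y hy.le]
  have hmid : EqOn (fun y => 1 - g y)
      (fun y => exp (-(μ * (y - xh₁))) + exp (-(μ * (xh₂ - y))) - exp (-(μ * (xh₂ - xh₁))))
      (Icc xh₁ xh₂) := by
    rintro y ⟨h1, h2⟩
    -- At either endpoint one factor of the product vanishes, as does `g` there.
    have hprod : g y = (1 - exp (-(μ * (y - xh₁)))) * (1 - exp (-(μ * (xh₂ - y)))) := by
      rcases h1.eq_or_lt with rfl | h1
      · simp [hg1 _ le_rfl]
      rcases h2.eq_or_lt with rfl | h2
      · simp [hg3 _ le_rfl]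
      exact hg2 y h1 h2
    simp only [hprod, one_sub_mul_one_sub_exp_neg_mul_sub]
  have hmid_int : IntervalIntegrable (fun y => 1 - g y) volume xh₁ xh₂ :=
    ((Continuous.continuousOn (by fun_prop)).congr hmid).intervalIntegrable_of_Icc h12
  rw [integral_eq_Iic_add_intervalIntegral_add_Ioi
      ((integrableOn_exp_neg_mul_sub_Iic hμ xh₁).congr_fun hleft.symm measurableSet_Iic) hmid_int
      ((integrableOn_exp_neg_mul_sub_Ioi hμ xh₂).congr_fun hright.symm measurableSet_Ioi),
    setIntegral_congr_fun measurableSet_Iic hleft, setIntegral_congr_fun measurableSet_Ioi hright,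
    intervalIntegral.integral_congr (by rwa [uIcc_of_le h12]),
    integral_exp_neg_mul_sub_Iic hμ, integral_exp_neg_mul_sub_Ioi hμ,
    intervalIntegral_exp_neg_mul_sub_add_exp_neg_mul_sub hμ.ne']
  field_simp
  ring
end

section
/- Consider the window obstacle model on [−L/2, L/2] with intensity λ > 0 and rate μ > 0: on a probability space, N is a Poisson random variable with mean λL; (Y_j)_{j≥1} are i.i.d. uniform on [−L/2, L/2]; (V_j)_{j≥1} and (W_j)_{j≥1} are i.i.d. exponential with rate μ; and N, (Y_j), (V_j), (W_j) are mutually independent. Obstacle j is the segment [Y_j − V_j, Y_j + W_j]. Then for any real x̂, the probability that no obstacle j ≤ N covers x̂ equals exp(−λ ∫_{−L/2}^{L/2} e^{−μ|x̂ − y|} dy). -/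
/-! Given its centre `y`, an obstacle with independent exponential half-lengths `V, W` covers
`x̂` iff `V ≥ y - x̂` and `W ≥ x̂ - y`, which has probability `e^{-μ|x̂ - y|}`; averaging over the
uniform centre, each obstacle misses `x̂` with probability `q = 1 - (1/L) ∫ e^{-μ|x̂ - y|} dy`.
Grouping the coordinates of each obstacle into one block, `N` and the obstacles are independent, so
the probability is `∑ₙ P(N = n) qⁿ`, the generating function `e^{λL(q - 1)}` of the Poisson law. -/

open MeasureTheory ProbabilityTheory

/-- Codomain family for the joint family consisting of the Poisson count `N`
(index `none`) and the real random variables `Y j`, `V j`, `W j` (indices `some (j, 0)`,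
`some (j, 1)`, `some (j, 2)`). -/
def WindowObstacleFam : Option (ℕ × Fin 3) → Type
  | none => ℕ
  | some _ => ℝ

instance : ∀ i, MeasurableSpace (WindowObstacleFam i)
  | none => inferInstanceAs (MeasurableSpace ℕ)
  | some _ => inferInstanceAs (MeasurableSpace ℝ)

/-- The joint family `{N, Y 0, V 0, W 0, Y 1, V 1, W 1, …}`. -/
def windowObstacleFun {Ω : Type*} (N : Ω → ℕ) (Y V W : ℕ → Ω → ℝ) :
    ∀ i : Option (ℕ × Fin 3), Ω → WindowObstacleFam i
  | none => N
  | some (j, k) => ![Y j, V j, W j] k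

open MeasurableSpace Real
open scoped NNReal Nat

namespace ProbabilityTheory

variable {Ω : Type*} {mΩ : MeasurableSpace Ω} {P : Measure Ω}

theorem iIndep.iSup_fiber {ι κ : Type*} {m : ι → MeasurableSpace Ω} (h_le : ∀ i, m i ≤ mΩ)
    (h : iIndep m P) (g : ι → κ) : iIndep (fun k => ⨆ i ∈ g ⁻¹' {k}, m i) P := by
  classical
  refine iIndepSets.iIndep (fun k => iSup₂_le fun i _ => h_le i)
    (fun k => piiUnionInter (fun i => {s | MeasurableSet[m i] s}) (g ⁻¹' {k}))
    (fun k => isPiSystem_piiUnionInter _ (fun i => @isPiSystem_measurableSet Ω (m i)) _)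
    (fun k => (generateFrom_piiUnionInter_measurableSet m _).symm) ?_
  rw [iIndepSets_iff]
  intro K t ht
  choose! p hp f hf ht_eq using ht
  have hg : ∀ k ∈ K, ∀ i ∈ p k, g i = k := fun k hk i hi => hp k hk hi
  have hinter : ⋂ k ∈ K, t k = ⋂ i ∈ K.biUnion p, f (g i) i := by
    rw [Finset.set_biInter_biUnion]
    refine Set.iInter₂_congr fun k hk => ?_
    rw [ht_eq k hk]
    exact Set.iInter₂_congr fun i hi => by rw [hg k hk i hi]
  have hdisj : (K : Set κ).PairwiseDisjoint p := by
    intro k hk k' hk' hkk'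
    refine Finset.disjoint_left.mpr fun i hi hi' => hkk' ?_
    rw [← hg k hk i hi, hg k' hk' i hi']
  have hmeas : ∀ i ∈ K.biUnion p, MeasurableSet[m i] (f (g i) i) := by
    intro i hi
    obtain ⟨k, hk, hi⟩ := Finset.mem_biUnion.mp hi
    rw [hg k hk i hi]
    exact hf k hk i hi
  rw [hinter, h.meas_biInter hmeas, Finset.prod_biUnion hdisj]
  refine Finset.prod_congr rfl fun k hk => ?_
  rw [ht_eq k hk, h.meas_biInter (hf k hk)]
  exact Finset.prod_congr rfl fun i hi => by rw [hg k hk i hi]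

theorem iIndep.measure_setOf_forall_lt {m : Option ℕ → MeasurableSpace Ω}
    (h_le : ∀ i, m i ≤ mΩ) (h : iIndep m P) {N : Ω → ℕ} (hN : Measurable[m none] N)
    {A : ℕ → Set Ω} (hA : ∀ j, MeasurableSet[m (some j)] (A j)) :
    P {ω | ∀ j < N ω, ω ∈ A j} = ∑' n, P (N ⁻¹' {n}) * ∏ j ∈ Finset.range n, P (A j) := by
  classical
  let E : ℕ → Option ℕ → Set Ω := fun n i => i.elim (N ⁻¹' {n}) A
  have hE : ∀ n, N ⁻¹' {n} ∩ ⋂ j ∈ Finset.range n, A j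
      = ⋂ i ∈ Finset.insertNone (Finset.range n), E n i := by
    intro n; ext ω
    simp only [Set.mem_inter_iff, Set.mem_iInter, Finset.mem_insertNone, Finset.mem_range]
    refine ⟨fun ⟨hn, hA⟩ i hi => ?_,
      fun hω => ⟨hω none (by simp), fun j hj => hω (some j) (by simpa)⟩⟩
    cases i with
    | none => exact hn
    | some j => exact hA j (by simpa using hi)
  have hunion : {ω | ∀ j < N ω, ω ∈ A j} = ⋃ n, N ⁻¹' {n} ∩ ⋂ j ∈ Finset.range n, A j := by
    ext ω; simp
  rw [hunion, measure_iUnion]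
  · refine tsum_congr fun n => ?_
    rw [hE, h.meas_biInter, Finset.prod_insertNone]
    · rfl
    · rintro (_ | j) _
      exacts [hN (measurableSet_singleton n), hA j]
  · intro n n' hnn'
    exact Set.disjoint_left.mpr fun ω hω hω' => hnn' (hω.1.symm.trans hω'.1)
  · exact fun n => ((h_le none) _ (hN (measurableSet_singleton n))).inter
      (Finset.measurableSet_biInter _ fun j _ => (h_le (some j)) _ (hA j))

end ProbabilityTheory

theorem tsum_poissonMeasure_singleton_mul_pow (r : ℝ≥0) {q : ℝ} (hq : 0 ≤ q) :
    ∑' n, poissonMeasure r {n} * ENNReal.ofReal q ^ n = ENNReal.ofReal (exp (r * (q - 1))) := by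
  have hsum : HasSum (fun n : ℕ => exp (-r) * ((r * q) ^ n / n !)) (exp (-r) * exp (r * q)) := by
    rw [exp_eq_exp_ℝ]
    exact (NormedSpace.expSeries_div_hasSum_exp (r * q : ℝ)).mul_left _
  have hterm : ∀ n, poissonMeasure r {n} * ENNReal.ofReal q ^ n
      = ENNReal.ofReal (exp (-r) * ((r * q) ^ n / n !)) := by
    intro n
    rw [poissonMeasure_singleton, ← ENNReal.ofReal_pow hq, ← ENNReal.ofReal_mul (by positivity)]
    ring_nf
  simp_rw [hterm]
  rw [← ENNReal.ofReal_tsum_of_nonneg (fun n => by positivity) hsum.summable, hsum.tsum_eq,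
    ← exp_add]
  ring_nf

theorem expMeasure_Ici {r : ℝ} (hr : 0 < r) (t : ℝ) :
    expMeasure r (Set.Ici t) = ENNReal.ofReal (exp (-(r * max t 0))) := by
  have : IsProbabilityMeasure (expMeasure r) := isProbabilityMeasure_expMeasure hr
  have : NullSingletonClass (expMeasure r) :=
    ⟨fun x => withDensity_absolutelyContinuous _ _ (measure_singleton x)⟩
  rw [← Set.compl_Iio, prob_compl_eq_one_sub measurableSet_Iio,
    measure_congr Iio_ae_eq_Iic, ← ofReal_cdf, cdf_expMeasure_eq hr]
  split_ifs with ht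
  · rw [max_eq_left ht, ← ENNReal.ofReal_one, ← ENNReal.ofReal_sub _
      (sub_nonneg.mpr (exp_le_one_iff.mpr (by nlinarith)))]
    ring_nf
  · simp [max_eq_right (not_le.mp ht).le]

theorem lintegral_ofReal_smul_restrict_Icc {a b c : ℝ} (hab : a ≤ b) {f : ℝ → ℝ}
    (hf : IntegrableOn f (Set.Icc a b)) (hf_nonneg : ∀ y, 0 ≤ f y) :
    ∫⁻ y, ENNReal.ofReal (f y) ∂((ENNReal.ofReal c)⁻¹ • volume.restrict (Set.Icc a b))
      = (ENNReal.ofReal c)⁻¹ * ENNReal.ofReal (∫ y in a..b, f y) := by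
  rw [lintegral_smul_measure, smul_eq_mul, intervalIntegral.integral_of_le hab,
    ← integral_Icc_eq_integral_Ioc,
    ofReal_integral_eq_lintegral_ofReal hf (Filter.Eventually.of_forall hf_nonneg)]

section Coverage

variable {Ω : Type*} {mΩ : MeasurableSpace Ω} {P : Measure Ω} [IsProbabilityMeasure P]

theorem measure_sub_le_and_le_add_eq_lintegral {r : ℝ} (hr : 0 < r) {Y V W : Ω → ℝ}
    (hY : Measurable Y) (hV : Measurable V) (hW : Measurable W)
    (hVlaw : P.map V = expMeasure r) (hWlaw : P.map W = expMeasure r)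
    (hVW : IndepFun V W P) (hYVW : IndepFun Y (fun ω => (V ω, W ω)) P) (x : ℝ) :
    P {ω | Y ω - V ω ≤ x ∧ x ≤ Y ω + W ω}
      = ∫⁻ y, ENNReal.ofReal (exp (-(r * |x - y|))) ∂(P.map Y) := by
  have : IsProbabilityMeasure (expMeasure r) := isProbabilityMeasure_expMeasure hr
  have hlaw : P.map (fun ω => (Y ω, V ω, W ω))
      = (P.map Y).prod ((expMeasure r).prod (expMeasure r)) := by
    rw [(indepFun_iff_map_prod_eq_prod_map_map hY.aemeasurable
        (hV.prodMk hW).aemeasurable).mp hYVW,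
      (indepFun_iff_map_prod_eq_prod_map_map hV.aemeasurable hW.aemeasurable).mp hVW,
      hVlaw, hWlaw]
  let S : Set (ℝ × ℝ × ℝ) := {p | p.1 - p.2.1 ≤ x ∧ x ≤ p.1 + p.2.2}
  have hS : MeasurableSet S := by
    simp only [S]; measurability
  have hslice : ∀ y, Prod.mk y ⁻¹' S = Set.Ici (y - x) ×ˢ Set.Ici (x - y) := by
    intro y; ext ⟨v, w⟩
    simp only [S, Set.mem_preimage, Set.mem_ofPred_eq, Set.mem_prod, Set.mem_Ici]
    constructor <;> rintro ⟨h₁, h₂⟩ <;> constructor <;> linarith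
  calc P {ω | Y ω - V ω ≤ x ∧ x ≤ Y ω + W ω} = P.map (fun ω => (Y ω, V ω, W ω)) S := by
        rw [Measure.map_apply (hY.prodMk (hV.prodMk hW)) hS]; rfl
    _ = ∫⁻ y, ENNReal.ofReal (exp (-(r * |x - y|))) ∂(P.map Y) := by
        rw [hlaw, Measure.prod_apply hS]
        refine lintegral_congr fun y => ?_
        rw [hslice, Measure.prod_prod, expMeasure_Ici hr, expMeasure_Ici hr,
          ← ENNReal.ofReal_mul (exp_nonneg _), ← exp_add, abs_sub_comm,
          ← max_zero_add_max_neg_zero_eq_abs_self (y - x), neg_sub]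
        ring_nf

end Coverage

section WindowObstacle

variable {Ω : Type*} {mΩ : MeasurableSpace Ω} {P : Measure Ω}
  {N : Ω → ℕ} {Y V W : ℕ → Ω → ℝ}

theorem measurable_windowObstacleFun (hN : Measurable N) (hY : ∀ j, Measurable (Y j))
    (hV : ∀ j, Measurable (V j)) (hW : ∀ j, Measurable (W j)) :
    ∀ i, Measurable (windowObstacleFun N Y V W i)
  | none => hN
  | some (j, 0) => hY j
  | some (j, 1) => hV j
  | some (j, 2) => hW j

theorem measure_forall_lt_not_covers_eq_tsum (hN : Measurable N) (hY : ∀ j, Measurable (Y j))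
    (hV : ∀ j, Measurable (V j)) (hW : ∀ j, Measurable (W j))
    (hindep : iIndepFun (windowObstacleFun N Y V W) P) (x : ℝ) :
    P {ω | ∀ j < N ω, ¬ (Y j ω - V j ω ≤ x ∧ x ≤ Y j ω + W j ω)}
      = ∑' n, P (N ⁻¹' {n}) *
          ∏ j ∈ Finset.range n, P {ω | ¬ (Y j ω - V j ω ≤ x ∧ x ≤ Y j ω + W j ω)} := by
  have hf := measurable_windowObstacleFun hN hY hV hW
  let m i := MeasurableSpace.comap (windowObstacleFun N Y V W i) inferInstance
  let block : Option (ℕ × Fin 3) → Option ℕ := Option.map Prod.fst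
  let M k := ⨆ i ∈ block ⁻¹' {k}, m i
  have hblocks : iIndep M P :=
    ((iIndepFun_iff_iIndep _ _ P).mp hindep).iSup_fiber (fun i => (hf i).comap_le) block
  have hmeas : ∀ i, Measurable[M (block i)] (windowObstacleFun N Y V W i) :=
    fun i => (comap_measurable _).mono (le_iSup₂ (f := fun i' _ => m i') i rfl) le_rfl
  have hY' (j) : Measurable[M (some j)] (Y j) := hmeas (some (j, 0))
  have hV' (j) : Measurable[M (some j)] (V j) := hmeas (some (j, 1))
  have hW' (j) : Measurable[M (some j)] (W j) := hmeas (some (j, 2))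
  exact hblocks.measure_setOf_forall_lt (fun k => iSup₂_le fun i _ => (hf i).comap_le)
    (hmeas none) fun j => ((measurableSet_le ((hY' j).sub (hV' j)) measurable_const).inter
      (measurableSet_le measurable_const ((hY' j).add (hW' j)))).compl

theorem measure_covers_eq [IsProbabilityMeasure P] {μ L : ℝ} (hμ : 0 < μ) (hL : 0 < L)
    (hN : Measurable N) (hY : ∀ j, Measurable (Y j)) (hV : ∀ j, Measurable (V j)) (hW : ∀ j, Measurable (W j))
    (hYlaw : ∀ j, P.map (Y j)
      = (ENNReal.ofReal L)⁻¹ • volume.restrict (Set.Icc (-(L / 2)) (L / 2)))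
    (hVlaw : ∀ j, P.map (V j) = expMeasure μ) (hWlaw : ∀ j, P.map (W j) = expMeasure μ)
    (hindep : iIndepFun (windowObstacleFun N Y V W) P) (x : ℝ) (j : ℕ) :
    P {ω | Y j ω - V j ω ≤ x ∧ x ≤ Y j ω + W j ω}
      = ENNReal.ofReal ((∫ y in -(L / 2)..(L / 2), exp (-(μ * |x - y|))) / L) := by
  have hVW : IndepFun (V j) (W j) P :=
    hindep.indepFun (i := some (j, 1)) (j := some (j, 2)) (by simp)
  have hYVW : IndepFun (Y j) (fun ω => (V j ω, W j ω)) P :=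
    (hindep.indepFun_prodMk (measurable_windowObstacleFun hN hY hV hW)
      (some (j, 1)) (some (j, 2)) (some (j, 0)) (by simp) (by simp)).symm
  rw [measure_sub_le_and_le_add_eq_lintegral hμ (hY j) (hV j) (hW j) (hVlaw j) (hWlaw j) hVW hYVW,
    hYlaw j, lintegral_ofReal_smul_restrict_Icc (by linarith)
      (Continuous.integrableOn_Icc (by fun_prop)) (fun _ => (exp_pos _).le),
    ENNReal.ofReal_div_of_pos hL, ENNReal.div_eq_inv_mul]

end WindowObstacle

/-- Window obstacle model on `[−L/2, L/2]` with intensity `λ` and rate `μ`: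
`N` Poisson with mean `λL`, `(Y j)` i.i.d. uniform on `[−L/2, L/2]`, `(V j)`, `(W j)` i.i.d.
exponential with rate `μ`, all mutually independent; obstacle `j` is `[Y j − V j, Y j + W j]`.
For any `x̂`, the probability that no obstacle `j < N` covers `x̂` equals
`exp(−λ ∫_{−L/2}^{L/2} e^{−μ|x̂ − y|} dy)`. -/
theorem window_LOS_prob_one_point
    {Ω : Type*} [MeasurableSpace Ω] (P : Measure Ω) [IsProbabilityMeasure P]
    (lam μ L : ℝ) (hlam : 0 < lam) (hμ : 0 < μ) (hL : 0 < L)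
    (N : Ω → ℕ) (Y V W : ℕ → Ω → ℝ)
    (hNmeas : Measurable N) (hYmeas : ∀ j, Measurable (Y j))
    (hVmeas : ∀ j, Measurable (V j)) (hWmeas : ∀ j, Measurable (W j))
    (hN : Measure.map N P = poissonMeasure (lam * L).toNNReal)
    (hY : ∀ j, Measure.map (Y j) P
        = (ENNReal.ofReal L)⁻¹ • (volume.restrict (Set.Icc (-(L / 2)) (L / 2))))
    (hV : ∀ j, Measure.map (V j) P = expMeasure μ)
    (hW : ∀ j, Measure.map (W j) P = expMeasure μ)
    (hindep : iIndepFun (windowObstacleFun N Y V W) P)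
    (xh : ℝ) :
    P {ω | ∀ j < N ω, ¬ (Y j ω - V j ω ≤ xh ∧ xh ≤ Y j ω + W j ω)}
      = ENNReal.ofReal
          (Real.exp (-(lam * ∫ y in -(L / 2)..(L / 2), Real.exp (-(μ * |xh - y|))))) := by
  set I := ∫ y in -(L / 2)..(L / 2), exp (-(μ * |xh - y|))
  have hcover := measure_covers_eq hμ hL hNmeas hYmeas hVmeas hWmeas hY hV hW hindep xh
  have hI : 0 ≤ I := intervalIntegral.integral_nonneg (by linarith) fun _ _ => (exp_pos _).le
  have hIL : I / L ≤ 1 := ENNReal.ofReal_le_one.mp (hcover 0 ▸ prob_le_one)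
  have hfree (j : ℕ) :
      P {ω | ¬ (Y j ω - V j ω ≤ xh ∧ xh ≤ Y j ω + W j ω)} = ENNReal.ofReal (1 - I / L) := by
    rw [← Set.compl_ofPred, prob_compl_eq_one_sub, hcover, ← ENNReal.ofReal_one,
      ENNReal.ofReal_sub _ (div_nonneg hI hL.le)]
    exact ((measurableSet_le ((hYmeas j).sub (hVmeas j)) measurable_const).inter
      (measurableSet_le measurable_const ((hYmeas j).add (hWmeas j))))
  simp_rw [measure_forall_lt_not_covers_eq_tsum hNmeas hYmeas hVmeas hWmeas hindep, hfree,
    Finset.prod_const, Finset.card_range, ← Measure.map_apply hNmeas (measurableSet_singleton _),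
    hN, tsum_poissonMeasure_singleton_mul_pow _ (sub_nonneg.mpr hIL),
    Real.coe_toNNReal _ (mul_pos hlam hL).le]
  congr 2
  field_simp
  ring
end
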